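/- Let n ≥ 1, let k ≥ 1 be an integer and let 1 < p < ∞. There is a constant c = c(n,p,k) such that for every weight w ∈ A_p and every f with ‖f‖_{L^p(w)} < ∞, ‖M^k f‖_{L^p(w)} ≤ c [w]_{A_p}^{k/(p−1)} ‖f‖_{L^p(w)}, where M^k denotes the k-fold composition of the Hardy–Littlewood maximal operator M. -/

import Mathlib

open MeasureTheory Filter
open scoped ENNReal NNReal

/-- A (closed) cube in ℝⁿ with sides parallel to the coordinate axes. -/
def IsCube (n : ℕ) (Q : Set (Fin n → ℝ)) : Prop :=
  ∃ (a : Fin n → ℝ) (h : ℝ), 0 < h ∧ Q = {y | ∀ i, y i ∈ Set.Icc (a i) (a i + h)}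

/-- Average of an `ℝ≥0∞`-valued function over a set. -/
noncomputable def setAvg (n : ℕ) (Q : Set (Fin n → ℝ)) (g : (Fin n → ℝ) → ℝ≥0∞) : ℝ≥0∞ :=
  (volume Q)⁻¹ * ∫⁻ y in Q, g y

/-- The Muckenhoupt `A_p` constant of a weight `w`. -/
noncomputable def ApConst (n : ℕ) (p : ℝ) (w : (Fin n → ℝ) → ℝ≥0∞) : ℝ≥0∞ :=
  ⨆ (Q : Set (Fin n → ℝ)) (_ : IsCube n Q),
    setAvg n Q w * (setAvg n Q fun y => w y ^ (1 - p / (p - 1))) ^ (p - 1)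

/-- A weight: a measurable nonnegative (`ℝ≥0∞`-valued) locally integrable function. -/
def IsWeight (n : ℕ) (w : (Fin n → ℝ) → ℝ≥0∞) : Prop :=
  Measurable w ∧ ∀ Q : Set (Fin n → ℝ), IsCube n Q → (∫⁻ y in Q, w y) < ∞

/-- Weighted L^p norm of an `ℝ≥0∞`-valued function. -/
noncomputable def wLpNormE (n : ℕ) (p : ℝ) (w : (Fin n → ℝ) → ℝ≥0∞)
    (g : (Fin n → ℝ) → ℝ≥0∞) : ℝ≥0∞ :=
  (∫⁻ x, g x ^ p * w x) ^ (1 / p)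

/-- Weighted L^p norm of a real function. -/
noncomputable def wLpNorm (n : ℕ) (p : ℝ) (w : (Fin n → ℝ) → ℝ≥0∞)
    (f : (Fin n → ℝ) → ℝ) : ℝ≥0∞ :=
  wLpNormE n p w fun x => (‖f x‖₊ : ℝ≥0∞)

/-- Unweighted L^p norm of a real function on ℝⁿ. -/
noncomputable def lpNorm (n : ℕ) (p : ℝ) (f : (Fin n → ℝ) → ℝ) : ℝ≥0∞ :=
  (∫⁻ x, (‖f x‖₊ : ℝ≥0∞) ^ p) ^ (1 / p)

/-- Unweighted L^p norm of an `ℝ≥0∞`-valued function on ℝⁿ. -/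
noncomputable def lpNormE (n : ℕ) (p : ℝ) (g : (Fin n → ℝ) → ℝ≥0∞) : ℝ≥0∞ :=
  (∫⁻ x, g x ^ p) ^ (1 / p)

/-- Operator norm on unweighted `L^p(ℝⁿ)`: the least `C ∈ [0,∞]` with
`‖Tf‖_p ≤ C ‖f‖_p` for all `f ∈ L^p`. -/
noncomputable def opNorm (n : ℕ) (p : ℝ)
    (T : ((Fin n → ℝ) → ℝ) → (Fin n → ℝ) → ℝ) : ℝ≥0∞ :=
  sInf {C : ℝ≥0∞ | ∀ f : (Fin n → ℝ) → ℝ, Measurable f → lpNorm n p f < ∞ →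
    lpNorm n p (T f) ≤ C * lpNorm n p f}

/-- The Hardy–Littlewood maximal operator (over cubes with sides parallel to the axes). -/
noncomputable def HLM (n : ℕ) (g : (Fin n → ℝ) → ℝ≥0∞) : (Fin n → ℝ) → ℝ≥0∞ :=
  fun x => ⨆ (Q : Set (Fin n → ℝ)) (_ : IsCube n Q) (_ : x ∈ Q), setAvg n Q g

/-- The operator norm of the Hardy–Littlewood maximal operator on `L^p(ℝⁿ)`. -/
noncomputable def maximalOpNorm (n : ℕ) (p : ℝ) : ℝ≥0∞ :=
  sInf {C : ℝ≥0∞ | ∀ f : (Fin n → ℝ) → ℝ, Measurable f → lpNorm n p f < ∞ →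
    lpNormE n p (HLM n fun y => (‖f y‖₊ : ℝ≥0∞)) ≤ C * lpNorm n p f}

/-!
Buckley's bound `‖M F‖_{L^p(w)} ≤ C [w]_{A_p}^{1/(p-1)} ‖F‖_{L^p(w)}`, applied `k` times.

By the one-third trick, `M F ≤ 6^n max_t M_t F`, where the `M_t` are the dyadic maximal
operators of `3^n` shifted dyadic grids. For a dyadic maximal operator we follow Lerner: with
`σ = w^{1-p'}`, the `A_p` condition on each dyadic cube `P` gives
`(⨍_P F)^{p-1} ≤ [w]_{A_p} ⨍^w_P ((M_t^σ (F/σ))^{p-1} w⁻¹)`, which reduces the weighted bound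
to the bounds of the dyadic maximal operators of the measures `w dx` on `L^{p'}` and `σ dx` on
`L^p`. The dyadic maximal operator of any measure is bounded on `L^q`, `q > 1`, with a
constant depending only on `q`, since its weak type `(1, 1)` bound only uses the disjoint
maximal cubes of a level set. A weight with finite `A_p` constant is either a.e. zero, which
is trivial, or a.e. positive, which the argument needs.
-/

open Set

noncomputable section

/-- The alternating sign of the shift `(-1)^k t / 3` is what makes each grid nested across
scales (`exists_dyadicIndex_succ`). -/
def dyadicIndex (t k : ℤ) (x : ℝ) : ℤ := ⌊x / 2 ^ k - (-1) ^ k * t / 3⌋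

def dyadicInterval (t k m : ℤ) : Set ℝ :=
  Ico (2 ^ k * (m + (-1) ^ k * t / 3)) (2 ^ k * (m + (-1) ^ k * t / 3) + 2 ^ k)

lemma mem_dyadicInterval_iff {t k m : ℤ} {x : ℝ} :
    x ∈ dyadicInterval t k m ↔ dyadicIndex t k x = m := by
  have h2 : (0 : ℝ) < 2 ^ k := zpow_pos two_pos k
  rw [dyadicIndex, Int.floor_eq_iff, dyadicInterval, mem_Ico, le_sub_iff_add_le,
    sub_lt_iff_lt_add, le_div_iff₀ h2, div_lt_iff₀ h2]
  constructor <;> rintro ⟨h₁, h₂⟩ <;> constructor <;> linarith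

lemma neg_one_zpow_eq_or (k : ℤ) : (-1 : ℝ) ^ k = 1 ∨ (-1 : ℝ) ^ k = -1 := by
  rcases Int.even_or_odd k with hk | hk
  · exact Or.inl hk.neg_one_zpow
  · exact Or.inr hk.neg_one_zpow

lemma exists_dyadicIndex_succ (t k : ℤ) :
    ∃ N : ℤ, ∀ x : ℝ, dyadicIndex t (k + 1) x = (dyadicIndex t k x + N) / (2 : ℕ) := by
  obtain ⟨N, hN⟩ : ∃ N : ℤ, (-1 : ℝ) ^ k * t = N := by
    rcases neg_one_zpow_eq_or k with h | h <;> rw [h]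
    exacts [⟨t, one_mul _⟩, ⟨-t, by push_cast; ring⟩]
  refine ⟨N, fun x => ?_⟩
  have hx : x / 2 ^ (k + 1) - (-1 : ℝ) ^ (k + 1) * t / 3 =
      (x / 2 ^ k - (-1) ^ k * t / 3 + N) / (2 : ℕ) := by
    rw [zpow_add_one₀ (by norm_num : (-1 : ℝ) ≠ 0), zpow_add_one₀ (two_ne_zero' ℝ)]
    push_cast
    linear_combination hN / 2
  rw [dyadicIndex, dyadicIndex, hx, Int.floor_div_natCast, Int.floor_add_intCast]

lemma dyadicIndex_eq_of_le {t k l : ℤ} (hkl : k ≤ l) {x y : ℝ}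
    (h : dyadicIndex t k x = dyadicIndex t k y) : dyadicIndex t l x = dyadicIndex t l y := by
  induction l, hkl using Int.leInduction with
  | base => exact h
  | succ l _ ih =>
    obtain ⟨N, hN⟩ := exists_dyadicIndex_succ t l
    rw [hN, hN, ih]

/-- The left endpoints of the scale-`k` intervals of the three grids `t = 0, 1, 2` together form
the lattice `(2^k / 3) ℤ`. -/
lemma exists_Icc_subset_dyadicInterval {h : ℝ} {k : ℤ} (hk : 3 * h ≤ 2 ^ k) (a : ℝ) :
    ∃ t ∈ Ico (0 : ℤ) 3, ∃ m, Icc a (a + h) ⊆ dyadicInterval t k m := by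
  have h2 : (0 : ℝ) < 2 ^ k := zpow_pos two_pos k
  set j := ⌊a / (2 ^ k / 3)⌋
  obtain ⟨s, hs, hs2⟩ : ∃ s : ℤ, (-1 : ℝ) ^ k = s ∧ s * s = 1 := by
    rcases neg_one_zpow_eq_or k with h | h
    exacts [⟨1, by rw [h]; norm_num, rfl⟩, ⟨-1, by rw [h]; norm_num, rfl⟩]
  refine ⟨s * j % 3, ⟨Int.emod_nonneg _ three_ne_zero, Int.emod_lt_of_pos _ three_pos⟩,
    s * (s * j / 3), ?_⟩
  have hjR : (3 * s * (s * j / 3 : ℤ) + s * (s * j % 3 : ℤ) : ℝ) = j := by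
    exact_mod_cast (by linear_combination s * Int.mul_ediv_add_emod (s * j) 3 + j * hs2 :
      (3 * s * (s * j / 3) + s * (s * j % 3) : ℤ) = j)
  have hleft : 2 ^ k * ((s * (s * j / 3) : ℤ) + (-1) ^ k * (s * j % 3 : ℤ) / 3 : ℝ) =
      2 ^ k / 3 * j := by
    rw [hs]
    push_cast
    linear_combination (2 ^ k / 3 : ℝ) * hjR
  have hj₁ : j * (2 ^ k / 3) ≤ a := (le_div_iff₀ (by positivity)).1 (Int.floor_le _)
  have hj₂ : a < (j + 1) * (2 ^ k / 3) := (div_lt_iff₀ (by positivity)).1 (Int.lt_floor_add_one _)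
  intro x hx
  rw [dyadicInterval, hleft]
  constructor <;> linarith [hx.1, hx.2]

section DyadicCube

variable {n : ℕ}

def dyadicCube (t : Fin n → ℤ) (k : ℤ) (m : Fin n → ℤ) : Set (Fin n → ℝ) :=
  univ.pi fun i => dyadicInterval (t i) k (m i)

def cubeIndex (t : Fin n → ℤ) (k : ℤ) (x : Fin n → ℝ) : Fin n → ℤ :=
  fun i => dyadicIndex (t i) k (x i)

variable {t : Fin n → ℤ} {k : ℤ} {m : Fin n → ℤ} {x : Fin n → ℝ}

lemma mem_dyadicCube_iff : x ∈ dyadicCube t k m ↔ cubeIndex t k x = m := by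
  simp only [dyadicCube, mem_univ_pi, mem_dyadicInterval_iff, funext_iff, cubeIndex]

lemma mem_dyadicCube_cubeIndex : x ∈ dyadicCube t k (cubeIndex t k x) :=
  mem_dyadicCube_iff.2 rfl

lemma measurableSet_dyadicCube : MeasurableSet (dyadicCube t k m) :=
  .univ_pi fun _ => measurableSet_Ico

lemma measurable_cubeIndex : Measurable (cubeIndex t k) :=
  measurable_pi_lambda _ fun i =>
    (((measurable_pi_apply i).div_const _).sub_const _).floor

lemma volume_dyadicCube : volume (dyadicCube t k m) = ENNReal.ofReal (2 ^ k) ^ n := by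
  simp [dyadicCube, dyadicInterval, volume_pi_pi, Real.volume_Ico]

lemma volume_dyadicCube_ne_zero : volume (dyadicCube t k m) ≠ 0 := by
  rw [volume_dyadicCube]
  exact pow_ne_zero _ (ENNReal.ofReal_pos.2 (zpow_pos two_pos k)).ne'

lemma volume_dyadicCube_ne_top : volume (dyadicCube t k m) ≠ ∞ := by
  simp [volume_dyadicCube]

lemma dyadicCube_subset_or_disjoint {l : ℤ} (hkl : k ≤ l) (m' : Fin n → ℤ) :
    dyadicCube t k m ⊆ dyadicCube t l m' ∨ Disjoint (dyadicCube t k m) (dyadicCube t l m') := by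
  refine or_iff_not_imp_right.2 fun h => ?_
  obtain ⟨x, hxk, hxl⟩ := not_disjoint_iff.1 h
  intro y hy
  rw [mem_dyadicCube_iff] at *
  rw [← hxl]
  funext i
  exact dyadicIndex_eq_of_le hkl (congrFun (hy.trans hxk.symm) i)

lemma cube_eq_univ_pi (a : Fin n → ℝ) (h : ℝ) :
    {y : Fin n → ℝ | ∀ i, y i ∈ Icc (a i) (a i + h)} = univ.pi fun i => Icc (a i) (a i + h) := by
  ext y
  simp only [mem_ofPred_eq, mem_univ_pi]

lemma volume_cube (a : Fin n → ℝ) (h : ℝ) :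
    volume {y : Fin n → ℝ | ∀ i, y i ∈ Icc (a i) (a i + h)} = ENNReal.ofReal h ^ n := by
  rw [cube_eq_univ_pi, volume_pi_pi]
  simp [Real.volume_Icc]

lemma exists_isCube_ae_eq_dyadicCube (t : Fin n → ℤ) (k : ℤ) (m : Fin n → ℤ) :
    ∃ Q, IsCube n Q ∧ Q =ᵐ[volume] dyadicCube t k m := by
  refine ⟨_, ⟨fun i => 2 ^ k * (m i + (-1) ^ k * t i / 3), 2 ^ k, zpow_pos two_pos k, rfl⟩, ?_⟩
  rw [cube_eq_univ_pi]
  exact Measure.pi_Ico_ae_eq_pi_Icc.symm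

lemma exists_cube_subset_dyadicCube {h : ℝ} (hh : 0 < h) (a : Fin n → ℝ) :
    ∃ (t : Fin n → Fin 3) (k : ℤ) (m : Fin n → ℤ),
      {y | ∀ i, y i ∈ Icc (a i) (a i + h)} ⊆ dyadicCube (fun i => t i) k m ∧
        (2 : ℝ) ^ k ≤ 6 * h := by
  obtain ⟨k, hk₁, hk₂⟩ := exists_mem_Ioc_zpow (by positivity : 0 < 3 * h) one_lt_two
  choose t ht m hm using fun i => exists_Icc_subset_dyadicInterval hk₂ (a i)
  refine ⟨fun i => ⟨(t i).toNat, by obtain ⟨h₀, h₃⟩ := ht i; omega⟩, k + 1, m, ?_, ?_⟩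
  · intro y hy
    simp only [dyadicCube, mem_univ_pi, Int.toNat_of_nonneg (ht _).1]
    exact fun i => hm i (hy i)
  · rw [zpow_add_one₀ two_ne_zero]; linarith

end DyadicCube

section MaximalCubes

variable {n : ℕ} {t : Fin n → ℤ}

lemma eq_of_dyadicCube_subset {k : ℤ} {m m' : Fin n → ℤ}
    (h : dyadicCube t k m ⊆ dyadicCube t k m') : m = m' := by
  obtain ⟨x, hx⟩ :=
    nonempty_of_measure_ne_zero (volume_dyadicCube_ne_zero (t := t) (k := k) (m := m))
  exact (mem_dyadicCube_iff.1 hx).symm.trans (mem_dyadicCube_iff.1 (h hx))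

lemma exists_pairwiseDisjoint_dyadicCube_subfamily (𝒞 : Set (ℤ × (Fin n → ℤ))) (K : ℤ)
    (hK : ∀ q ∈ 𝒞, q.1 ≤ K) :
    ∃ 𝒬 ⊆ 𝒞, 𝒬.PairwiseDisjoint (fun q => dyadicCube t q.1 q.2) ∧
      ⋃ q ∈ 𝒞, dyadicCube t q.1 q.2 ⊆ ⋃ q ∈ 𝒬, dyadicCube t q.1 q.2 := by
  refine ⟨{q ∈ 𝒞 | ∀ q' ∈ 𝒞, dyadicCube t q.1 q.2 ⊆ dyadicCube t q'.1 q'.2 → q'.1 ≤ q.1},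
    sep_subset _ _, ?_, ?_⟩
  · have key : ∀ q q' : ℤ × (Fin n → ℤ), q.1 ≤ q'.1 →
        dyadicCube t q.1 q.2 ⊆ dyadicCube t q'.1 q'.2 → q'.1 ≤ q.1 → q = q' := by
      rintro ⟨k, m⟩ ⟨k', m'⟩ h₁ hsub h₂
      obtain rfl : k = k' := le_antisymm h₁ h₂
      exact congrArg _ (eq_of_dyadicCube_subset hsub)
    intro q hq q' hq' hne
    rcases le_total q.1 q'.1 with h | h
    · exact (dyadicCube_subset_or_disjoint h q'.2).resolve_left
        fun hsub => hne (key q q' h hsub (hq.2 q' hq'.1 hsub))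
    · exact ((dyadicCube_subset_or_disjoint h q.2).resolve_left
        fun hsub => hne (key q' q h hsub (hq'.2 q hq.1 hsub)).symm).symm
  · simp only [iUnion_subset_iff]
    rintro ⟨k, m⟩ hq x hx
    obtain ⟨k', ⟨-, hk'𝒞⟩, hk'⟩ := Int.exists_greatest_of_bdd
      (P := fun k' => k' ≤ K ∧ (k', cubeIndex t k' x) ∈ 𝒞) ⟨K, fun _ h => h.1⟩
      ⟨k, hK _ hq, (mem_dyadicCube_iff.1 hx).symm ▸ hq⟩
    refine mem_biUnion ⟨hk'𝒞, ?_⟩ mem_dyadicCube_cubeIndex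
    rintro ⟨k'', m''⟩ hq'' hsub
    have hm'' : cubeIndex t k'' x = m'' := mem_dyadicCube_iff.1 (hsub mem_dyadicCube_cubeIndex)
    subst hm''
    exact hk' k'' ⟨hK _ hq'', hq''⟩

end MaximalCubes

section DyadicMaximal

lemma measure_le_inv_mul_setLIntegral_of_lt_setLAverage {α : Type*} [MeasurableSpace α]
    {μ : Measure α} {f : α → ℝ≥0∞} {s : Set α} {l : ℝ≥0∞} (hl : l ≠ 0)
    (h : l < ⨍⁻ y in s, f y ∂μ) : μ s ≤ l⁻¹ * ∫⁻ y in s, f y ∂μ := by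
  rw [setLAverage_eq] at h
  have hl' : l ≠ ∞ := ne_top_of_lt h
  rw [ENNReal.lt_div_iff_mul_lt (Or.inr hl') (Or.inr hl)] at h
  exact (ENNReal.mul_le_iff_le_inv hl hl').1 h.le

variable {n : ℕ} {t : Fin n → ℤ} {μ : Measure (Fin n → ℝ)} {F : (Fin n → ℝ) → ℝ≥0∞}

def dyadicMaximal (t : Fin n → ℤ) (μ : Measure (Fin n → ℝ)) (F : (Fin n → ℝ) → ℝ≥0∞)
    (x : Fin n → ℝ) : ℝ≥0∞ :=
  ⨆ k : ℤ, ⨍⁻ y in dyadicCube t k (cubeIndex t k x), F y ∂μ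

lemma measurable_dyadicMaximal : Measurable (dyadicMaximal t μ F) :=
  .iSup fun k => (measurable_of_countable fun m => ⨍⁻ y in dyadicCube t k m, F y ∂μ).comp
    measurable_cubeIndex

lemma setLAverage_le_dyadicMaximal {k : ℤ} {m : Fin n → ℤ} {x : Fin n → ℝ}
    (hx : x ∈ dyadicCube t k m) : ⨍⁻ y in dyadicCube t k m, F y ∂μ ≤ dyadicMaximal t μ F x := by
  rw [mem_dyadicCube_iff] at hx
  subst hx
  exact le_iSup (fun k => ⨍⁻ y in dyadicCube t k (cubeIndex t k x), F y ∂μ) k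

lemma measure_le_inv_mul_setLIntegral {s : Set (Fin n → ℝ)} {l : ℝ≥0∞} (hl : l ≠ 0)
    (h : l < ⨍⁻ y in s, F y ∂μ) : μ s ≤ l⁻¹ * ∫⁻ y in s, F y ∂μ := by
  rw [setLAverage_eq] at h
  have hl' : l ≠ ∞ := ne_top_of_lt h
  have hs : μ s ≠ ∞ := fun hs => by simp [hs] at h
  rw [ENNReal.lt_div_iff_mul_lt (Or.inr hl') (Or.inr hl)] at h
  exact (ENNReal.mul_le_iff_le_inv hl hl').1 h.le

theorem measure_lt_dyadicMaximal_le {l : ℝ≥0∞} (hl : l ≠ 0) :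
    μ {x | l < dyadicMaximal t μ F x} ≤ l⁻¹ * ∫⁻ y, F y ∂μ := by
  set 𝒞 : Set (ℤ × (Fin n → ℤ)) := {q | l < ⨍⁻ y in dyadicCube t q.1 q.2, F y ∂μ}
  have hE : {x | l < dyadicMaximal t μ F x} =
      ⋃ K : ℤ, ⋃ q ∈ {q ∈ 𝒞 | q.1 ≤ K}, dyadicCube t q.1 q.2 := by
    ext x
    simp only [mem_ofPred_eq, dyadicMaximal, lt_iSup_iff, mem_iUnion, exists_prop]
    constructor
    · rintro ⟨k, hk⟩
      exact ⟨k, (k, cubeIndex t k x), ⟨hk, le_rfl⟩, mem_dyadicCube_cubeIndex⟩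
    · rintro ⟨K, ⟨k, m⟩, ⟨hq, -⟩, hx⟩
      have hm : cubeIndex t k x = m := mem_dyadicCube_iff.1 hx
      subst hm
      exact ⟨k, hq⟩
  have hmono : Monotone fun K : ℤ => ⋃ q ∈ {q ∈ 𝒞 | q.1 ≤ K}, dyadicCube t q.1 q.2 :=
    fun K K' hKK' => biUnion_subset_biUnion_left fun q hq => ⟨hq.1, hq.2.trans hKK'⟩
  rw [hE, hmono.measure_iUnion]
  refine iSup_le fun K => ?_
  obtain ⟨𝒬, h𝒬, hdisj, hcover⟩ :=
    exists_pairwiseDisjoint_dyadicCube_subfamily (t := t) {q ∈ 𝒞 | q.1 ≤ K} K fun q hq => hq.2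
  have hcount : 𝒬.Countable := to_countable 𝒬
  calc μ (⋃ q ∈ {q ∈ 𝒞 | q.1 ≤ K}, dyadicCube t q.1 q.2)
      ≤ μ (⋃ q ∈ 𝒬, dyadicCube t q.1 q.2) := measure_mono hcover
    _ = ∑' q : 𝒬, μ (dyadicCube t q.1.1 q.1.2) :=
      measure_biUnion hcount hdisj fun _ _ => measurableSet_dyadicCube
    _ ≤ ∑' q : 𝒬, l⁻¹ * ∫⁻ y in dyadicCube t q.1.1 q.1.2, F y ∂μ :=
      ENNReal.tsum_le_tsum fun q => measure_le_inv_mul_setLIntegral_of_lt_setLAverage hl (h𝒬 q.2).1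
    _ = l⁻¹ * ∫⁻ y in ⋃ q ∈ 𝒬, dyadicCube t q.1 q.2, F y ∂μ := by
      rw [ENNReal.tsum_mul_left,
        lintegral_biUnion hcount (fun _ _ => measurableSet_dyadicCube) hdisj]
    _ ≤ l⁻¹ * ∫⁻ y, F y ∂μ := mul_le_mul_right (setLIntegral_le_lintegral _ _) _

lemma dyadicMaximal_le_indicator_add (l : ℝ≥0∞) (x : Fin n → ℝ) :
    dyadicMaximal t μ F x ≤ dyadicMaximal t μ ({y | l < F y}.indicator F) x + l := by
  refine iSup_le fun k => ?_
  set P := dyadicCube t k (cubeIndex t k x)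
  have hF (y : Fin n → ℝ) : F y ≤ {y | l < F y}.indicator F y + l := by
    by_cases hy : l < F y
    · rw [indicator_of_mem (show y ∈ {y | l < F y} from hy)]; exact le_self_add
    · rw [indicator_of_notMem (show y ∉ {y | l < F y} from hy), zero_add]; exact not_lt.1 hy
  calc ⨍⁻ y in P, F y ∂μ ≤ ⨍⁻ y in P, ({y | l < F y}.indicator F y + l) ∂μ :=
        laverage_mono_ae (ae_of_all _ hF)
    _ = ⨍⁻ y in P, {y | l < F y}.indicator F y ∂μ + l * μ P / μ P := by
      rw [setLAverage_eq, setLAverage_eq, lintegral_add_right _ measurable_const,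
        setLIntegral_const, ENNReal.add_div]
    _ ≤ _ := add_le_add (setLAverage_le_dyadicMaximal mem_dyadicCube_cubeIndex)
        (ENNReal.div_le_of_le_mul le_rfl)

lemma measure_two_mul_lt_dyadicMaximal_le (hF : Measurable F) {l : ℝ≥0∞} (hl₀ : l ≠ 0)
    (hl : l ≠ ∞) :
    μ {x | 2 * l < dyadicMaximal t μ F x} ≤ l⁻¹ * ∫⁻ y in {y | l < F y}, F y ∂μ := by
  calc μ {x | 2 * l < dyadicMaximal t μ F x}
      ≤ μ {x | l < dyadicMaximal t μ ({y | l < F y}.indicator F) x} := by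
        refine measure_mono fun x hx => (ENNReal.add_lt_add_iff_right hl).1 ?_
        rw [← two_mul]
        exact hx.trans_le (dyadicMaximal_le_indicator_add l x)
    _ ≤ _ := by
      rw [← lintegral_indicator (measurableSet_lt measurable_const hF)]
      exact measure_lt_dyadicMaximal_le hl₀

end DyadicMaximal

section DyadicSum

lemma two_rpow_ne_zero (x : ℝ) : (2 : ℝ≥0∞) ^ x ≠ 0 := by simp
lemma two_rpow_ne_top (x : ℝ) : (2 : ℝ≥0∞) ^ x ≠ ∞ := by simp

lemma tsum_indicator_Iic_two_rpow (s : ℝ) (J : ℤ) :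
    ∑' i : ℤ, (Iic J).indicator (fun i : ℤ => (2 : ℝ≥0∞) ^ ((i : ℝ) * s)) i =
      2 ^ ((J : ℝ) * s) * (1 - 2 ^ (-s))⁻¹ := by
  have hinj : Function.Injective fun k : ℕ => J - k := fun a b h => by simpa using h
  rw [← hinj.tsum_eq fun i hi => ⟨(J - i).toNat, by
    have : i ∈ Iic J := by by_contra h; exact hi (indicator_of_notMem h _)
    simp only [mem_Iic] at this; simp only; omega⟩]
  have hterm (k : ℕ) :
      (2 : ℝ≥0∞) ^ (((J - k : ℤ) : ℝ) * s) = 2 ^ ((J : ℝ) * s) * (2 ^ (-s)) ^ k := by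
    rw [← ENNReal.rpow_natCast, ← ENNReal.rpow_mul,
      ← ENNReal.rpow_add _ _ two_ne_zero ENNReal.ofNat_ne_top]
    push_cast
    ring_nf
  simp only [mem_Iic, sub_le_self_iff, Nat.cast_nonneg, indicator_of_mem, hterm,
    ENNReal.tsum_mul_left, ENNReal.tsum_geometric]

lemma exists_two_rpow_lt_le {y : ℝ≥0∞} (hy₀ : y ≠ 0) (hy : y ≠ ∞) :
    ∃ i : ℤ, 2 ^ (i : ℝ) < y ∧ y ≤ 2 ^ ((i + 1 : ℤ) : ℝ) := by
  simp only [ENNReal.rpow_intCast]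
  exact ENNReal.exists_mem_Ioc_zpow hy₀ hy (by norm_num) ENNReal.ofNat_ne_top

/-- A dyadic discretization of `y ^ s`. -/
def dyadicSum (s : ℝ) (y : ℝ≥0∞) : ℝ≥0∞ :=
  ∑' i : ℤ, (Ioi (2 ^ (i : ℝ))).indicator (fun _ => 2 ^ ((i : ℝ) * s)) y

lemma dyadicSum_top {s : ℝ} (hs : 0 < s) : dyadicSum s ∞ = ∞ := by
  refine top_unique (le_of_eq_of_le ?_
    (ENNReal.tsum_comp_le_tsum_of_injective Nat.cast_injective _))
  calc ∞ = ∑' k : ℕ, ((2 : ℝ≥0∞) ^ s) ^ k := by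
        rw [ENNReal.tsum_geometric, tsub_eq_zero_of_le (ENNReal.one_le_rpow one_le_two hs),
          ENNReal.inv_zero]
    _ = ∑' k : ℕ, (Ioi (2 ^ ((k : ℤ) : ℝ))).indicator
          (fun _ => (2 : ℝ≥0∞) ^ (((k : ℤ) : ℝ) * s)) ∞ := tsum_congr fun k => by
        rw [indicator_of_mem (mem_Ioi.2 (lt_top_iff_ne_top.2 (two_rpow_ne_top _))),
          Int.cast_natCast, mul_comm, ENNReal.rpow_mul, ENNReal.rpow_natCast]

lemma rpow_le_two_rpow_mul_dyadicSum {s : ℝ} (hs : 0 < s) (y : ℝ≥0∞) :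
    y ^ s ≤ 2 ^ s * dyadicSum s y := by
  rcases eq_or_ne y 0 with rfl | hy0
  · simp [hs]
  rcases eq_or_ne y ∞ with rfl | hytop
  · simp [dyadicSum_top hs]
  obtain ⟨i, hi₁, hi₂⟩ := exists_two_rpow_lt_le hy0 hytop
  calc y ^ s ≤ (2 ^ ((i + 1 : ℤ) : ℝ)) ^ s := ENNReal.rpow_le_rpow hi₂ hs.le
    _ = 2 ^ s * 2 ^ ((i : ℝ) * s) := by
      rw [← ENNReal.rpow_mul, ← ENNReal.rpow_add _ _ two_ne_zero ENNReal.ofNat_ne_top]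
      push_cast
      ring_nf
    _ ≤ 2 ^ s * dyadicSum s y := by
      gcongr
      refine le_of_eq_of_le ?_ (ENNReal.le_tsum i)
      rw [indicator_of_mem (mem_Ioi.2 hi₁)]

lemma dyadicSum_le {s : ℝ} (hs : 0 < s) (y : ℝ≥0∞) :
    dyadicSum s y ≤ (1 - 2 ^ (-s))⁻¹ * y ^ s := by
  rcases eq_or_ne y 0 with rfl | hy0
  · simp [dyadicSum]
  rcases eq_or_ne y ∞ with rfl | hytop
  · simp [ENNReal.top_rpow_of_pos hs, ENNReal.mul_top]
  obtain ⟨J, hJ₁, hJ₂⟩ := exists_two_rpow_lt_le hy0 hytop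
  calc dyadicSum s y
      ≤ ∑' i : ℤ, (Iic J).indicator (fun i : ℤ => (2 : ℝ≥0∞) ^ ((i : ℝ) * s)) i := by
        refine ENNReal.tsum_le_tsum fun i => ?_
        by_cases hi : 2 ^ (i : ℝ) < y
        · have : i ≤ J := by
            by_contra! h
            have := ENNReal.rpow_le_rpow_of_exponent_le one_le_two
              (by exact_mod_cast h : ((J + 1 : ℤ) : ℝ) ≤ i)
            exact absurd (hJ₂.trans this) (not_le.2 hi)
          rw [indicator_of_mem (mem_Ioi.2 hi), indicator_of_mem (mem_Iic.2 this)]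
        · rw [indicator_of_notMem (show y ∉ Ioi _ from hi)]
          exact zero_le
    _ = 2 ^ ((J : ℝ) * s) * (1 - 2 ^ (-s))⁻¹ := tsum_indicator_Iic_two_rpow s J
    _ ≤ (1 - 2 ^ (-s))⁻¹ * y ^ s := by
      rw [mul_comm, ENNReal.rpow_mul]
      gcongr

end DyadicSum

section DyadicMaximalLp

variable {n : ℕ} {t : Fin n → ℤ} {μ : Measure (Fin n → ℝ)} {F : (Fin n → ℝ) → ℝ≥0∞}

def dyadicMaximalConst (q : ℝ) : ℝ≥0∞ := 4 ^ q * (1 - 2 ^ (1 - q))⁻¹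

lemma dyadicMaximalConst_ne_zero (q : ℝ) : dyadicMaximalConst q ≠ 0 :=
  mul_ne_zero (by simp) (ENNReal.inv_ne_zero.2 (ENNReal.sub_ne_top ENNReal.one_ne_top))

lemma dyadicMaximalConst_ne_top {q : ℝ} (hq : 1 < q) : dyadicMaximalConst q ≠ ∞ := by
  refine ENNReal.mul_ne_top (by simp) (ENNReal.inv_ne_top.2 (tsub_pos_of_lt ?_).ne')
  exact ENNReal.rpow_lt_one_of_one_lt_of_neg (by norm_num) (by linarith)

lemma rpow_sub_one_mul_self {q : ℝ} (hq : 1 ≤ q) (y : ℝ≥0∞) : y ^ (q - 1) * y = y ^ q := by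
  conv_rhs => rw [← sub_add_cancel q 1, ENNReal.rpow_add_of_nonneg _ _ (by linarith) zero_le_one,
    ENNReal.rpow_one]

/-- Stated as a single integral so that the levels `j` can be summed under the integral sign. -/
lemma two_rpow_mul_measure_lt_dyadicMaximal_le (hF : Measurable F) {q : ℝ} (j : ℤ) :
    (2 : ℝ≥0∞) ^ (((j + 1 : ℤ) : ℝ) * q) *
        μ {x | 2 ^ ((j + 1 : ℤ) : ℝ) < dyadicMaximal t μ F x} ≤
      2 ^ q * ∫⁻ y, (Ioi (2 ^ (j : ℝ))).indicator (fun _ => 2 ^ ((j : ℝ) * (q - 1))) (F y) * F y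
        ∂μ := by
  have h2 : (2 : ℝ≥0∞) ^ ((j + 1 : ℤ) : ℝ) = 2 * 2 ^ (j : ℝ) := by
    rw [Int.cast_add, Int.cast_one, ENNReal.rpow_add _ _ two_ne_zero ENNReal.ofNat_ne_top,
      ENNReal.rpow_one, mul_comm]
  have hc : (2 : ℝ≥0∞) ^ (((j + 1 : ℤ) : ℝ) * q) * (2 ^ (j : ℝ))⁻¹ =
      2 ^ q * 2 ^ ((j : ℝ) * (q - 1)) := by
    rw [← ENNReal.rpow_neg, ← ENNReal.rpow_add _ _ two_ne_zero ENNReal.ofNat_ne_top,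
      ← ENNReal.rpow_add _ _ two_ne_zero ENNReal.ofNat_ne_top]
    push_cast
    ring_nf
  have hind : {y | 2 ^ (j : ℝ) < F y}.indicator (fun y => 2 ^ ((j : ℝ) * (q - 1)) * F y) =
      fun y => (Ioi (2 ^ (j : ℝ))).indicator (fun _ => (2 : ℝ≥0∞) ^ ((j : ℝ) * (q - 1))) (F y) *
        F y := by
    ext y
    by_cases hy : 2 ^ (j : ℝ) < F y
    · rw [indicator_of_mem (show y ∈ {y | _ < F y} from hy),
        indicator_of_mem (show F y ∈ Ioi _ from hy)]
    · rw [indicator_of_notMem (show y ∉ {y | _ < F y} from hy),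
        indicator_of_notMem (show F y ∉ Ioi _ from hy), zero_mul]
  calc _ ≤ 2 ^ (((j + 1 : ℤ) : ℝ) * q) *
        ((2 ^ (j : ℝ))⁻¹ * ∫⁻ y in {y | 2 ^ (j : ℝ) < F y}, F y ∂μ) := by
        rw [h2]
        gcongr
        exact measure_two_mul_lt_dyadicMaximal_le hF (two_rpow_ne_zero _) (two_rpow_ne_top _)
    _ = _ := by
      rw [← mul_assoc, hc, mul_assoc, ← lintegral_const_mul' _ _ (two_rpow_ne_top _),
        ← lintegral_indicator (measurableSet_lt measurable_const hF), hind]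

theorem lintegral_dyadicMaximal_rpow_le {q : ℝ} (hq : 1 < q) (hF : Measurable F) :
    ∫⁻ x, dyadicMaximal t μ F x ^ q ∂μ ≤ dyadicMaximalConst q * ∫⁻ x, F x ^ q ∂μ := by
  have hq0 : 0 < q := by linarith
  calc ∫⁻ x, dyadicMaximal t μ F x ^ q ∂μ
      ≤ ∫⁻ x, 2 ^ q * dyadicSum q (dyadicMaximal t μ F x) ∂μ :=
        lintegral_mono fun x => rpow_le_two_rpow_mul_dyadicSum hq0 _
    _ = 2 ^ q * ∑' i : ℤ, 2 ^ ((i : ℝ) * q) *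
          μ {x | 2 ^ (i : ℝ) < dyadicMaximal t μ F x} := by
        rw [lintegral_const_mul' _ _ (two_rpow_ne_top q)]
        unfold dyadicSum
        rw [lintegral_tsum]
        · exact congrArg _ (tsum_congr fun i =>
            lintegral_indicator_const_comp measurable_dyadicMaximal measurableSet_Ioi _)
        · exact fun i => ((measurable_const.indicator measurableSet_Ioi).comp
            measurable_dyadicMaximal).aemeasurable
    _ = 2 ^ q * ∑' j : ℤ, 2 ^ (((j + 1 : ℤ) : ℝ) * q) *
          μ {x | 2 ^ ((j + 1 : ℤ) : ℝ) < dyadicMaximal t μ F x} := by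
        rw [← (Equiv.addRight (1 : ℤ)).tsum_eq]
        rfl
    _ ≤ 2 ^ q * ∑' j : ℤ, 2 ^ q * ∫⁻ y, (Ioi (2 ^ (j : ℝ))).indicator
          (fun _ => 2 ^ ((j : ℝ) * (q - 1))) (F y) * F y ∂μ :=
        mul_le_mul_right
          (ENNReal.tsum_le_tsum fun j => two_rpow_mul_measure_lt_dyadicMaximal_le hF j) _
    _ = 2 ^ q * (2 ^ q * ∫⁻ y, dyadicSum (q - 1) (F y) * F y ∂μ) := by
        rw [ENNReal.tsum_mul_left, ← lintegral_tsum]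
        · simp only [dyadicSum, ENNReal.tsum_mul_right]
        · exact fun j =>
            (((measurable_const.indicator measurableSet_Ioi).comp hF).mul hF).aemeasurable
    _ ≤ 2 ^ q * (2 ^ q * ∫⁻ y, (1 - 2 ^ (-(q - 1)))⁻¹ * F y ^ (q - 1) * F y ∂μ) := by
        gcongr with y
        exact dyadicSum_le (by linarith) _
    _ = dyadicMaximalConst q * ∫⁻ x, F x ^ q ∂μ := by
        simp only [mul_assoc, rpow_sub_one_mul_self hq.le]
        rw [lintegral_const_mul _ (hF.pow_const q), dyadicMaximalConst, neg_sub, ← mul_assoc,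
          ← mul_assoc, ← ENNReal.mul_rpow_of_nonneg _ _ hq0.le]
        norm_num

end DyadicMaximalLp

section Lerner

lemma setLIntegral_ne_zero {α : Type*} [MeasurableSpace α] {μ : Measure α} {f : α → ℝ≥0∞}
    (hf : Measurable f) (hf₀ : ∀ᵐ y ∂μ, f y ≠ 0) {P : Set α} (hP : μ P ≠ 0) :
    ∫⁻ y in P, f y ∂μ ≠ 0 := by
  rw [Ne, lintegral_eq_zero_iff hf]
  intro h
  have : ∀ᵐ y ∂μ.restrict P, False := by
    filter_upwards [h, ae_restrict_of_ae hf₀] with y h₁ h₂ using h₂ h₁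
  exact hP (Measure.restrict_eq_zero.1 (ae_eq_bot.1 (eventually_false_iff_eq_bot.1 this)))

lemma setLIntegral_withDensity_div_self {α : Type*} [MeasurableSpace α] {μ : Measure α}
    {w : α → ℝ≥0∞} (hw : Measurable w) (hw₀ : ∀ᵐ y ∂μ, w y ≠ 0) (hw_top : ∀ᵐ y ∂μ, w y ≠ ∞)
    (G : α → ℝ≥0∞) {P : Set α} (hP : MeasurableSet P) :
    ∫⁻ y in P, G y / w y ∂μ.withDensity w = ∫⁻ y in P, G y ∂μ := by
  rw [setLIntegral_withDensity_eq_setLIntegral_mul_non_measurable _ hw _ hP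
    (ae_restrict_of_ae (hw_top.mono fun y h => lt_top_iff_ne_top.2 h))]
  refine setLIntegral_congr_fun_ae hP ?_
  filter_upwards [hw₀, hw_top] with y h₀ h_top _
  exact ENNReal.mul_div_cancel h₀ h_top

variable {n : ℕ}

/-- Lerner's cube estimate: write `⨍_P F` as `σ(P) / |P|` times the `σ`-average of `F / σ`. -/
lemma setLAverage_rpow_le {p : ℝ} (hp : 1 < p) {w σ F G : (Fin n → ℝ) → ℝ≥0∞}
    {P : Set (Fin n → ℝ)} {A : ℝ≥0∞} (hP : MeasurableSet P) (hP₀ : volume P ≠ 0)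
    (hP_top : volume P ≠ ∞) (hw : Measurable w) (hw₀ : ∀ᵐ y, w y ≠ 0) (hw_top : ∀ᵐ y, w y ≠ ∞)
    (hwP : ∫⁻ y in P, w y ≠ ∞) (hσ : Measurable σ) (hσ₀ : ∀ᵐ y, σ y ≠ 0)
    (hσ_top : ∀ᵐ y, σ y ≠ ∞)
    (hA : (⨍⁻ y in P, w y ∂volume) * (⨍⁻ y in P, σ y ∂volume) ^ (p - 1) ≤ A) (hA_top : A ≠ ∞)
    (hG : ∀ y ∈ P, ⨍⁻ z in P, F z / σ z ∂volume.withDensity σ ≤ G y) :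
    (⨍⁻ y in P, F y ∂volume) ^ (p - 1) ≤
      A * ⨍⁻ y in P, G y ^ (p - 1) / w y ∂volume.withDensity w := by
  have hp1 : 0 < p - 1 := by linarith
  rw [setLAverage_eq, setLAverage_eq] at hA
  rw [setLAverage_eq, withDensity_apply _ hP, setLIntegral_withDensity_div_self hσ hσ₀ hσ_top _ hP]
    at hG
  rw [setLAverage_eq, setLAverage_eq, withDensity_apply _ hP,
    setLIntegral_withDensity_div_self hw hw₀ hw_top _ hP]
  set W := ∫⁻ y in P, w y
  set S := ∫⁻ y in P, σ y
  set I := ∫⁻ y in P, F y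
  have hW₀ : W ≠ 0 := setLIntegral_ne_zero hw hw₀ hP₀
  have hS₀ : S ≠ 0 := setLIntegral_ne_zero hσ hσ₀ hP₀
  have hS_top : S ≠ ∞ := by
    intro hS
    rw [hS, ENNReal.top_div_of_ne_top hP_top, ENNReal.top_rpow_of_pos hp1,
      ENNReal.mul_top (ENNReal.div_ne_zero.2 ⟨hW₀, hP_top⟩)] at hA
    exact hA_top (top_unique hA)
  have hI : (I / S) ^ (p - 1) ≤ (∫⁻ y in P, G y ^ (p - 1)) / volume P := by
    rw [ENNReal.le_div_iff_mul_le (Or.inl hP₀) (Or.inl hP_top), ← setLIntegral_const]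
    exact setLIntegral_mono' hP fun y hy => ENNReal.rpow_le_rpow (hG y hy) hp1.le
  have hSP : (S / volume P) ^ (p - 1) ≤ A * (volume P / W) := by
    rw [← ENNReal.inv_div (Or.inl hP_top) (Or.inl hP₀), ← div_eq_mul_inv,
      ENNReal.le_div_iff_mul_le (Or.inl (ENNReal.div_ne_zero.2 ⟨hW₀, hP_top⟩))
        (Or.inl (ENNReal.div_ne_top hwP hP₀)), mul_comm]
    exact hA
  calc (I / volume P) ^ (p - 1) = (S / volume P * (I / S)) ^ (p - 1) := by
        congr 1
        simp only [div_eq_mul_inv]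
        calc I * (volume P)⁻¹ = S * S⁻¹ * I * (volume P)⁻¹ := by
              rw [ENNReal.mul_inv_cancel hS₀ hS_top, one_mul]
          _ = S * (volume P)⁻¹ * (I * S⁻¹) := by ring
    _ = (S / volume P) ^ (p - 1) * (I / S) ^ (p - 1) := ENNReal.mul_rpow_of_nonneg _ _ hp1.le
    _ ≤ A * (volume P / W) * ((∫⁻ y in P, G y ^ (p - 1)) / volume P) := mul_le_mul' hSP hI
    _ = A * ((∫⁻ y in P, G y ^ (p - 1)) / W) := by
      simp only [div_eq_mul_inv]
      calc _ = A * (∫⁻ y in P, G y ^ (p - 1)) * W⁻¹ * (volume P * (volume P)⁻¹) := by ring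
        _ = _ := by rw [ENNReal.mul_inv_cancel hP₀ hP_top, mul_one, mul_assoc]

lemma ENNReal.iSup_rpow {ι : Sort*} (f : ι → ℝ≥0∞) {r : ℝ} (hr : 0 < r) :
    (⨆ i, f i) ^ r = ⨆ i, f i ^ r :=
  (ENNReal.orderIsoRpow r hr).map_iSup f

lemma dyadicMaximal_rpow_le_mul_dyadicMaximal {p : ℝ} (hp : 1 < p) (t : Fin n → ℤ)
    {w σ : (Fin n → ℝ) → ℝ≥0∞} (hw : Measurable w) (hw₀ : ∀ᵐ y, w y ≠ 0)
    (hw_top : ∀ᵐ y, w y ≠ ∞) (hw_loc : ∀ k m, ∫⁻ y in dyadicCube t k m, w y ≠ ∞)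
    (hσ : Measurable σ) (hσ₀ : ∀ᵐ y, σ y ≠ 0) (hσ_top : ∀ᵐ y, σ y ≠ ∞)
    {A : ℝ≥0∞} (hA_top : A ≠ ∞)
    (hA : ∀ k m, (⨍⁻ y in dyadicCube t k m, w y ∂volume) *
      (⨍⁻ y in dyadicCube t k m, σ y ∂volume) ^ (p - 1) ≤ A)
    (F : (Fin n → ℝ) → ℝ≥0∞) (x : Fin n → ℝ) :
    dyadicMaximal t volume F x ^ (p - 1) ≤
      A * dyadicMaximal t (volume.withDensity w) (fun y =>
        dyadicMaximal t (volume.withDensity σ) (fun z => F z / σ z) y ^ (p - 1) / w y) x := by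
  rw [dyadicMaximal, ENNReal.iSup_rpow _ (by linarith)]
  refine iSup_le fun k => le_trans ?_
    (mul_le_mul_right (setLAverage_le_dyadicMaximal (k := k) mem_dyadicCube_cubeIndex) A)
  exact setLAverage_rpow_le hp measurableSet_dyadicCube volume_dyadicCube_ne_zero
    volume_dyadicCube_ne_top hw hw₀ hw_top (hw_loc _ _) hσ hσ₀ hσ_top (hA _ _) hA_top
    fun y hy => setLAverage_le_dyadicMaximal hy

lemma mul_rpow_sub_one_div_rpow_conj {p : ℝ} (hp : 1 < p) {u : ℝ≥0∞} (hu₀ : u ≠ 0)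
    (hu_top : u ≠ ∞) (a : ℝ≥0∞) :
    u * (a ^ (p - 1) / u) ^ (p / (p - 1)) = u ^ (1 - p / (p - 1)) * a ^ p := by
  have hpp' : (p - 1) * (p / (p - 1)) = p := (Real.HolderConjugate.conjExponent hp).sub_one_mul_conj
  rw [ENNReal.div_rpow_of_nonneg _ _ (div_nonneg (by linarith) (by linarith)),
    ← ENNReal.rpow_mul, hpp', ENNReal.rpow_sub _ _ hu₀ hu_top, ENNReal.rpow_one]
  simp only [div_eq_mul_inv]
  ring

lemma rpow_conj_mul_div_rpow {p : ℝ} (hp : 1 < p) {u a : ℝ≥0∞}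
    (hσ₀ : u ^ (1 - p / (p - 1)) ≠ 0) (hσ_top : u ^ (1 - p / (p - 1)) ≠ ∞) :
    u ^ (1 - p / (p - 1)) * (a / u ^ (1 - p / (p - 1))) ^ p = a ^ p * u := by
  have hσw : (1 - p / (p - 1)) * (1 - p) = 1 := by
    field_simp [show p - 1 ≠ 0 by linarith]; ring
  calc _ = a ^ p * (u ^ (1 - p / (p - 1))) ^ (1 - p) := by
        rw [ENNReal.div_rpow_of_nonneg _ _ (by linarith), ENNReal.rpow_sub _ _ hσ₀ hσ_top,
          ENNReal.rpow_one]
        simp only [div_eq_mul_inv]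
        ring
    _ = a ^ p * u := by rw [← ENNReal.rpow_mul, hσw, ENNReal.rpow_one]

/-- Lerner's pointwise estimate reduces the bound to the `L^{p'}` and `L^p` bounds for the
dyadic maximal operators of the measures `w dx` and `σ dx`, `σ = w^{1-p'}`. -/
theorem lintegral_dyadicMaximal_rpow_mul_le {p : ℝ} (hp : 1 < p) (t : Fin n → ℤ)
    {w : (Fin n → ℝ) → ℝ≥0∞} (hw : Measurable w) (hw₀ : ∀ᵐ y, w y ≠ 0)
    (hw_top : ∀ᵐ y, w y ≠ ∞) (hw_loc : ∀ k m, ∫⁻ y in dyadicCube t k m, w y ≠ ∞)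
    {A : ℝ≥0∞} (hA_top : A ≠ ∞)
    (hA : ∀ k m, (⨍⁻ y in dyadicCube t k m, w y ∂volume) *
      (⨍⁻ y in dyadicCube t k m, w y ^ (1 - p / (p - 1)) ∂volume) ^ (p - 1) ≤ A)
    {F : (Fin n → ℝ) → ℝ≥0∞} (hF : Measurable F) :
    ∫⁻ x, dyadicMaximal t volume F x ^ p * w x ≤
      dyadicMaximalConst (p / (p - 1)) * dyadicMaximalConst p * A ^ (p / (p - 1)) *
        ∫⁻ x, F x ^ p * w x := by
  have hp' : 1 < p / (p - 1) := (Real.HolderConjugate.conjExponent hp).symm.lt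
  have hpp' : (p - 1) * (p / (p - 1)) = p := (Real.HolderConjugate.conjExponent hp).sub_one_mul_conj
  have hneg : 1 - p / (p - 1) < 0 := by linarith
  set σ := fun y => w y ^ (1 - p / (p - 1))
  have hσ : Measurable σ := hw.pow_const _
  have hσ₀ : ∀ᵐ y, σ y ≠ 0 :=
    hw_top.mono fun y h => by simp [σ, ENNReal.rpow_eq_zero_iff, h, hneg.not_gt]
  have hσ_top : ∀ᵐ y, σ y ≠ ∞ :=
    hw₀.mono fun y h => by simp [σ, ENNReal.rpow_eq_top_iff, h, hneg.not_gt]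
  set g := fun y => F y / σ y
  have hg : Measurable g := hF.div hσ
  set H := fun y => dyadicMaximal t (volume.withDensity σ) g y ^ (p - 1) / w y
  have hH : Measurable H := (measurable_dyadicMaximal.pow_const _).div hw
  have hHw : ∫⁻ x, H x ^ (p / (p - 1)) ∂volume.withDensity w =
      ∫⁻ x, dyadicMaximal t (volume.withDensity σ) g x ^ p ∂volume.withDensity σ := by
    rw [lintegral_withDensity_eq_lintegral_mul _ hw (hH.pow_const _),
      lintegral_withDensity_eq_lintegral_mul _ hσ (measurable_dyadicMaximal.pow_const _)]
    refine lintegral_congr_ae ?_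
    filter_upwards [hw₀, hw_top] with y h₀ h_top
    exact mul_rpow_sub_one_div_rpow_conj hp h₀ h_top _
  have hgσ : ∫⁻ x, g x ^ p ∂volume.withDensity σ = ∫⁻ x, F x ^ p * w x := by
    rw [lintegral_withDensity_eq_lintegral_mul _ hσ (hg.pow_const _)]
    refine lintegral_congr_ae ?_
    filter_upwards [hσ₀, hσ_top] with y h₀ h_top
    exact rpow_conj_mul_div_rpow hp h₀ h_top
  calc ∫⁻ x, dyadicMaximal t volume F x ^ p * w x
      = ∫⁻ x, (dyadicMaximal t volume F x ^ (p - 1)) ^ (p / (p - 1)) * w x := by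
        simp_rw [← ENNReal.rpow_mul, hpp']
    _ ≤ ∫⁻ x, (A * dyadicMaximal t (volume.withDensity w) H x) ^ (p / (p - 1)) * w x :=
        lintegral_mono fun x => mul_le_mul_left (ENNReal.rpow_le_rpow
          (dyadicMaximal_rpow_le_mul_dyadicMaximal hp t hw hw₀ hw_top hw_loc hσ hσ₀ hσ_top
            hA_top hA F x) (by positivity)) _
    _ = A ^ (p / (p - 1)) * ∫⁻ x, dyadicMaximal t (volume.withDensity w) H x ^ (p / (p - 1))
          ∂volume.withDensity w := by
        rw [lintegral_withDensity_eq_lintegral_mul _ hw (measurable_dyadicMaximal.pow_const _),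
          ← lintegral_const_mul' _ _ (ENNReal.rpow_ne_top_of_nonneg (by positivity) hA_top)]
        refine lintegral_congr fun x => ?_
        rw [ENNReal.mul_rpow_of_nonneg _ _ (by positivity), Pi.mul_apply]
        ring
    _ ≤ A ^ (p / (p - 1)) * (dyadicMaximalConst (p / (p - 1)) *
          (dyadicMaximalConst p * ∫⁻ x, g x ^ p ∂volume.withDensity σ)) := by
        refine mul_le_mul_right ((lintegral_dyadicMaximal_rpow_le hp' hH).trans ?_) _
        rw [hHw]
        exact mul_le_mul_right (lintegral_dyadicMaximal_rpow_le hp hg) _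
    _ = _ := by rw [hgσ]; ring

end Lerner

section MaximalFunction

variable {n : ℕ}

lemma setAvg_eq_setLAverage (Q : Set (Fin n → ℝ)) (g : (Fin n → ℝ) → ℝ≥0∞) :
    setAvg n Q g = ⨍⁻ y in Q, g y ∂volume := by
  rw [setAvg, setLAverage_eq, div_eq_mul_inv, mul_comm]

lemma setAvg_le_HLM {F : (Fin n → ℝ) → ℝ≥0∞} {Q : Set (Fin n → ℝ)} (hQ : IsCube n Q)
    {x : Fin n → ℝ} (hx : x ∈ Q) : setAvg n Q F ≤ HLM n F x :=
  le_iSup₂_of_le Q hQ (le_iSup_of_le hx le_rfl)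

lemma setAvg_mul_rpow_le_ApConst (p : ℝ) (w : (Fin n → ℝ) → ℝ≥0∞) {Q : Set (Fin n → ℝ)}
    (hQ : IsCube n Q) :
    setAvg n Q w * (setAvg n Q fun y => w y ^ (1 - p / (p - 1))) ^ (p - 1) ≤ ApConst n p w :=
  le_iSup₂ (f := fun Q (_ : IsCube n Q) =>
    setAvg n Q w * (setAvg n Q fun y => w y ^ (1 - p / (p - 1))) ^ (p - 1)) Q hQ

lemma setLAverage_dyadicCube_mul_le_ApConst (p : ℝ) (w : (Fin n → ℝ) → ℝ≥0∞) (t : Fin n → ℤ)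
    (k : ℤ) (m : Fin n → ℤ) :
    (⨍⁻ y in dyadicCube t k m, w y ∂volume) *
      (⨍⁻ y in dyadicCube t k m, w y ^ (1 - p / (p - 1)) ∂volume) ^ (p - 1) ≤ ApConst n p w := by
  obtain ⟨Q, hQ, hae⟩ := exists_isCube_ae_eq_dyadicCube t k m
  rw [← setLAverage_congr hae, ← setLAverage_congr hae, ← setAvg_eq_setLAverage,
    ← setAvg_eq_setLAverage]
  exact setAvg_mul_rpow_le_ApConst p w hQ

lemma IsWeight.setLIntegral_dyadicCube_ne_top {w : (Fin n → ℝ) → ℝ≥0∞} (hw : IsWeight n w)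
    (t : Fin n → ℤ) (k : ℤ) (m : Fin n → ℤ) : ∫⁻ y in dyadicCube t k m, w y ≠ ∞ := by
  obtain ⟨Q, hQ, hae⟩ := exists_isCube_ae_eq_dyadicCube t k m
  rw [← setLIntegral_congr hae]
  exact (hw.2 Q hQ).ne

lemma exists_lt_setAvg_enlarged {F : (Fin n → ℝ) → ℝ≥0∞} {a : Fin n → ℝ} {h : ℝ}
    {c : ℝ≥0∞} (hc : c < setAvg n {y | ∀ i, y i ∈ Icc (a i) (a i + h)} F) :
    ∃ ε > 0, c < (ENNReal.ofReal (h + 2 * ε) ^ n)⁻¹ *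
      ∫⁻ y in {y | ∀ i, y i ∈ Icc (a i) (a i + h)}, F y := by
  rw [setAvg, volume_cube] at hc
  have hcont : Continuous fun ε : ℝ => (ENNReal.ofReal (h + 2 * ε) ^ n)⁻¹ :=
    continuous_inv.comp ((ENNReal.continuous_pow n).comp
      (ENNReal.continuous_ofReal.comp (by fun_prop)))
  have hlim := ENNReal.Tendsto.mul_const (hcont.tendsto 0)
    (b := ∫⁻ y in {y | ∀ i, y i ∈ Icc (a i) (a i + h)}, F y) (Or.inl (by simp))
  simp only [mul_zero, add_zero] at hlim
  obtain ⟨ε, hε, hε₀⟩ := ((tendsto_nhdsWithin_of_tendsto_nhds (s := Ioi 0) hlim).eventually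
    (lt_mem_nhds hc)).and self_mem_nhdsWithin |>.exists
  exact ⟨ε, hε₀, hε⟩

lemma lowerSemicontinuous_HLM (F : (Fin n → ℝ) → ℝ≥0∞) : LowerSemicontinuous (HLM n F) := by
  intro x c hc
  simp only [HLM, lt_iSup_iff] at hc
  obtain ⟨_, ⟨a, h, hh, rfl⟩, hx, hc⟩ := hc
  obtain ⟨ε, hε, hcε⟩ := exists_lt_setAvg_enlarged hc
  set Q' := {y : Fin n → ℝ | ∀ i, y i ∈ Icc (a i - ε) (a i - ε + (h + 2 * ε))}
  filter_upwards [Metric.ball_mem_nhds x hε] with x' hx'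
  have hx'Q' : x' ∈ Q' := fun i => by
    have hd := (dist_le_pi_dist x' x i).trans_lt (Metric.mem_ball.1 hx')
    rw [Real.dist_eq, abs_lt] at hd
    constructor <;> linarith [(hx i).1, (hx i).2]
  calc c < _ := hcε
    _ ≤ setAvg n Q' F := by
      rw [setAvg, volume_cube]
      refine mul_le_mul_right (lintegral_mono_set fun y hy i => ?_) _
      constructor <;> linarith [(hy i).1, (hy i).2]
    _ ≤ HLM n F x' := setAvg_le_HLM ⟨_, _, by linarith, rfl⟩ hx'Q'

lemma measurable_HLM (F : (Fin n → ℝ) → ℝ≥0∞) : Measurable (HLM n F) :=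
  (lowerSemicontinuous_HLM F).measurable

lemma HLM_le_iSup_dyadicMaximal (F : (Fin n → ℝ) → ℝ≥0∞) (x : Fin n → ℝ) :
    HLM n F x ≤ 6 ^ n * ⨆ t : Fin n → Fin 3, dyadicMaximal (fun i => t i) volume F x := by
  refine iSup₂_le fun Q hQ => iSup_le fun hx => ?_
  obtain ⟨a, h, hh, rfl⟩ := hQ
  obtain ⟨t, k, m, hsub, hk⟩ := exists_cube_subset_dyadicCube hh a
  set Q := {y : Fin n → ℝ | ∀ i, y i ∈ Icc (a i) (a i + h)}
  set P := dyadicCube (fun i => (t i : ℤ)) k m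
  have hQ₀ : volume Q ≠ 0 := by rw [volume_cube]; simp [hh]
  have hQ_top : volume Q ≠ ∞ := by rw [volume_cube]; simp
  have hvol : volume P ≤ volume Q * 6 ^ n := by
    rw [volume_dyadicCube, volume_cube, ← mul_pow]
    gcongr
    rw [← ENNReal.ofReal_ofNat 6, ← ENNReal.ofReal_mul hh.le, mul_comm]
    exact ENNReal.ofReal_le_ofReal hk
  calc setAvg n Q F ≤ (volume Q)⁻¹ * ∫⁻ y in P, F y :=
        mul_le_mul_right (lintegral_mono_set hsub) _
    _ = (volume Q)⁻¹ * volume P * ⨍⁻ y in P, F y ∂volume := by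
      rw [mul_assoc, setLAverage_eq,
        ENNReal.mul_div_cancel volume_dyadicCube_ne_zero volume_dyadicCube_ne_top]
    _ ≤ 6 ^ n * dyadicMaximal (fun i => t i) volume F x :=
      mul_le_mul' ((ENNReal.inv_mul_le_iff hQ₀ hQ_top).2 hvol)
        (setLAverage_le_dyadicMaximal (hsub hx))
    _ ≤ _ := mul_le_mul_right
      (le_iSup (fun t : Fin n → Fin 3 => dyadicMaximal (fun i => t i) volume F x) t) _

end MaximalFunction

section Weights

variable {n : ℕ}

lemma IsCube.volume_ne_top {Q : Set (Fin n → ℝ)} (hQ : IsCube n Q) : volume Q ≠ ∞ := by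
  obtain ⟨a, h, -, rfl⟩ := hQ
  rw [volume_cube]
  simp

def centeredCube (n j : ℕ) : Set (Fin n → ℝ) :=
  {y | ∀ i, y i ∈ Icc (-(j + 1 : ℝ)) (-(j + 1) + 2 * (j + 1))}

lemma isCube_centeredCube (j : ℕ) : IsCube n (centeredCube n j) :=
  ⟨fun _ => -(j + 1 : ℝ), 2 * (j + 1), by positivity, rfl⟩

lemma centeredCube_mono : Monotone (centeredCube n) := fun j j' hjj' y hy i => by
  have : (j : ℝ) ≤ j' := by exact_mod_cast hjj'
  constructor <;> linarith [(hy i).1, (hy i).2]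

lemma iUnion_centeredCube : ⋃ j, centeredCube n j = univ := by
  refine eq_univ_of_forall fun y => mem_iUnion.2 ?_
  obtain ⟨j, hj⟩ := exists_nat_ge ‖y‖
  refine ⟨j, fun i => ?_⟩
  have := abs_le.1 ((Real.norm_eq_abs _ ▸ norm_le_pi_norm y i).trans hj)
  constructor <;> linarith [this.1, this.2]

lemma ae_of_forall_ae_restrict_centeredCube {P : (Fin n → ℝ) → Prop}
    (h : ∀ j, ∀ᵐ y ∂volume.restrict (centeredCube n j), P y) : ∀ᵐ y, P y := by
  rw [← Measure.restrict_univ (μ := volume), ← iUnion_centeredCube]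
  exact (ae_restrict_iUnion_iff _ _).2 h

lemma IsWeight.ae_ne_top {w : (Fin n → ℝ) → ℝ≥0∞} (hw : IsWeight n w) : ∀ᵐ y, w y ≠ ∞ :=
  ae_of_forall_ae_restrict_centeredCube fun j =>
    (ae_lt_top hw.1 (hw.2 _ (isCube_centeredCube j)).ne).mono fun _ h => h.ne

/-- Where `w = 0` the function `w ^ (1 - p / (p - 1))` is infinite, so if `w` vanished on a part
of `Q` of positive but not full measure, the `A_p` product over `Q` would be infinite. -/
lemma ae_eq_zero_or_ae_ne_zero_of_isCube {p : ℝ} (hp : 1 < p) {w : (Fin n → ℝ) → ℝ≥0∞}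
    (hw : Measurable w) (hAp : ApConst n p w < ∞) {Q : Set (Fin n → ℝ)} (hQ : IsCube n Q) :
    (∀ᵐ y ∂volume.restrict Q, w y = 0) ∨ ∀ᵐ y ∂volume.restrict Q, w y ≠ 0 := by
  have hneg : 1 - p / (p - 1) < 0 := sub_neg.2 (Real.HolderConjugate.conjExponent hp).symm.lt
  refine or_iff_not_imp_left.2 fun hw₀ => ?_
  by_contra hw_ne
  have hW : ∫⁻ y in Q, w y ≠ 0 := fun h0 => hw₀ ((lintegral_eq_zero_iff hw).1 h0)
  have hzero : volume.restrict Q {y | w y = 0} ≠ 0 := fun h0 =>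
    hw_ne (ae_iff.2 (by simpa using h0))
  have hS : ∫⁻ y in Q, w y ^ (1 - p / (p - 1)) = ∞ := by
    refine top_unique ?_
    calc ∞ = ∫⁻ y in Q, {y | w y = 0}.indicator (fun _ => ∞) y := by
          rw [lintegral_indicator_const (show MeasurableSet {y | w y = 0} from
            hw (measurableSet_singleton 0)), ENNReal.top_mul hzero]
      _ ≤ _ := lintegral_mono fun y => by
          by_cases hy : w y = 0
          · simp [hy, ENNReal.zero_rpow_of_neg hneg]
          · simp [hy]
  have htop : setAvg n Q w * (setAvg n Q fun y => w y ^ (1 - p / (p - 1))) ^ (p - 1) = ∞ := by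
    rw [setAvg, setAvg, hS, ENNReal.mul_top (ENNReal.inv_ne_zero.2 hQ.volume_ne_top),
      ENNReal.top_rpow_of_pos (by linarith), ENNReal.mul_top]
    exact mul_ne_zero (ENNReal.inv_ne_zero.2 hQ.volume_ne_top) hW
  exact hAp.ne (top_unique (htop ▸ setAvg_mul_rpow_le_ApConst p w hQ))

lemma IsWeight.ae_eq_zero_or_ae_ne_zero {p : ℝ} (hp : 1 < p) {w : (Fin n → ℝ) → ℝ≥0∞}
    (hw : IsWeight n w) (hAp : ApConst n p w < ∞) : (∀ᵐ y, w y = 0) ∨ ∀ᵐ y, w y ≠ 0 := by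
  by_cases h : ∀ j, ∀ᵐ y ∂volume.restrict (centeredCube n j), w y = 0
  · exact Or.inl (ae_of_forall_ae_restrict_centeredCube h)
  obtain ⟨j₀, hj₀⟩ := not_forall.1 h
  refine Or.inr (ae_of_forall_ae_restrict_centeredCube fun j => ?_)
  have hsub := centeredCube_mono (n := n) (le_max_left j j₀)
  rcases ae_eq_zero_or_ae_ne_zero_of_isCube hp hw.1 hAp (isCube_centeredCube (max j j₀))
    with h | h
  · exact absurd
      (ae_restrict_of_ae_restrict_of_subset (centeredCube_mono (le_max_right j j₀)) h) hj₀
  · exact ae_restrict_of_ae_restrict_of_subset hsub h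

end Weights

section Buckley

variable {n : ℕ}

def buckleyConst (n : ℕ) (p : ℝ) : ℝ≥0∞ :=
  (6 ^ n) ^ p * 3 ^ n * dyadicMaximalConst (p / (p - 1)) * dyadicMaximalConst p

lemma buckleyConst_ne_zero (n : ℕ) (p : ℝ) : buckleyConst n p ≠ 0 := by
  simp [buckleyConst, dyadicMaximalConst_ne_zero, ENNReal.rpow_eq_zero_iff]

lemma buckleyConst_ne_top {p : ℝ} (hp : 1 < p) : buckleyConst n p ≠ ∞ := by
  refine ENNReal.mul_ne_top (ENNReal.mul_ne_top (ENNReal.mul_ne_top ?_ (by simp))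
    (dyadicMaximalConst_ne_top (Real.HolderConjugate.conjExponent hp).symm.lt))
    (dyadicMaximalConst_ne_top hp)
  exact ENNReal.rpow_ne_top_of_nonneg (by linarith) (by simp)

lemma HLM_rpow_le_sum {p : ℝ} (hp : 0 < p) (F : (Fin n → ℝ) → ℝ≥0∞) (x : Fin n → ℝ) :
    HLM n F x ^ p ≤
      (6 ^ n) ^ p * ∑ t : Fin n → Fin 3, dyadicMaximal (fun i => t i) volume F x ^ p :=
  calc HLM n F x ^ p
      ≤ (6 ^ n * ⨆ t : Fin n → Fin 3, dyadicMaximal (fun i => t i) volume F x) ^ p :=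
        ENNReal.rpow_le_rpow (HLM_le_iSup_dyadicMaximal F x) hp.le
    _ = (6 ^ n) ^ p * ⨆ t : Fin n → Fin 3, dyadicMaximal (fun i => t i) volume F x ^ p := by
        rw [ENNReal.mul_rpow_of_nonneg _ _ hp.le, ENNReal.iSup_rpow _ hp]
    _ ≤ _ := mul_le_mul_right (iSup_le fun t => Finset.single_le_sum
        (f := fun t : Fin n → Fin 3 => dyadicMaximal (fun i => t i) volume F x ^ p)
        (fun _ _ => zero_le) (Finset.mem_univ t)) _

theorem lintegral_HLM_rpow_mul_le {p : ℝ} (hp : 1 < p) {w : (Fin n → ℝ) → ℝ≥0∞}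
    (hw : IsWeight n w) (hAp : ApConst n p w < ∞) {F : (Fin n → ℝ) → ℝ≥0∞}
    (hF : Measurable F) :
    ∫⁻ x, HLM n F x ^ p * w x ≤
      buckleyConst n p * ApConst n p w ^ (p / (p - 1)) * ∫⁻ x, F x ^ p * w x := by
  rcases hw.ae_eq_zero_or_ae_ne_zero hp hAp with hw₀ | hw₀
  · refine le_of_eq_of_le ?_ zero_le
    rw [← lintegral_zero]
    exact lintegral_congr_ae (hw₀.mono fun x hx => by simp [hx])
  have hgrid (t : Fin n → Fin 3) :=
    lintegral_dyadicMaximal_rpow_mul_le hp (fun i => t i) hw.1 hw₀ hw.ae_ne_top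
      (hw.setLIntegral_dyadicCube_ne_top _) hAp.ne
      (setLAverage_dyadicCube_mul_le_ApConst p w _) hF
  calc ∫⁻ x, HLM n F x ^ p * w x
      ≤ ∫⁻ x, (6 ^ n) ^ p *
          ∑ t : Fin n → Fin 3, dyadicMaximal (fun i => t i) volume F x ^ p * w x :=
        lintegral_mono fun x => by
          rw [← Finset.sum_mul, ← mul_assoc]
          exact mul_le_mul_left (HLM_rpow_le_sum (by linarith) F x) _
    _ = (6 ^ n) ^ p *
          ∑ t : Fin n → Fin 3, ∫⁻ x, dyadicMaximal (fun i => t i) volume F x ^ p * w x := by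
        rw [lintegral_const_mul' _ _ (ENNReal.rpow_ne_top_of_nonneg (by linarith) (by simp)),
          lintegral_finsetSum]
        exact fun t _ => (measurable_dyadicMaximal.pow_const _).mul hw.1
    _ ≤ (6 ^ n) ^ p * ∑ _t : Fin n → Fin 3, dyadicMaximalConst (p / (p - 1)) *
          dyadicMaximalConst p * ApConst n p w ^ (p / (p - 1)) * ∫⁻ x, F x ^ p * w x :=
        mul_le_mul_right (Finset.sum_le_sum fun t _ => hgrid t) _
    _ = _ := by
        rw [Finset.sum_const, Finset.card_univ, Fintype.card_fun, Fintype.card_fin,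
          Fintype.card_fin, nsmul_eq_mul, buckleyConst]
        push_cast
        ring

end Buckley

end

lemma iterate_le_pow_mul {α : Type*} {S : Set α} {T : α → α} {N : α → ℝ≥0∞} {B : ℝ≥0∞}
    (hS : MapsTo T S S) (hT : ∀ x ∈ S, N (T x) ≤ B * N x) {x : α} (hx : x ∈ S) :
    ∀ j : ℕ, N (T^[j] x) ≤ B ^ j * N x
  | 0 => by simp
  | j + 1 => by
    rw [Function.iterate_succ_apply', pow_succ', mul_assoc]
    exact (hT _ (hS.iterate j hx)).trans (mul_le_mul_right (iterate_le_pow_mul hS hT hx j) B)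

lemma rpow_one_div_pow_mul_rpow {p : ℝ} (hp : 1 < p) (C A I : ℝ≥0∞) (k : ℕ) :
    ((C * A ^ (p / (p - 1))) ^ k * I) ^ (1 / p) =
      C ^ ((k : ℝ) / p) * A ^ ((k : ℝ) / (p - 1)) * I ^ (1 / p) := by
  have hp0 : 0 ≤ 1 / p := by positivity
  have hp1 : p - 1 ≠ 0 := by linarith
  rw [ENNReal.mul_rpow_of_nonneg _ _ hp0, mul_pow, ENNReal.mul_rpow_of_nonneg _ _ hp0,
    ← ENNReal.rpow_natCast, ← ENNReal.rpow_natCast, ← ENNReal.rpow_mul, ← ENNReal.rpow_mul,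
    ← ENNReal.rpow_mul]
  congr 3 <;> field_simp

theorem statement8_general (n : ℕ) (k : ℕ) (p : ℝ) (hp : 1 < p) :
    ∃ c : ℝ≥0∞, 0 < c ∧ c < ∞ ∧
      ∀ w : (Fin n → ℝ) → ℝ≥0∞, IsWeight n w → ApConst n p w < ∞ →
        ∀ f : (Fin n → ℝ) → ℝ, Measurable f → wLpNorm n p w f < ∞ →
          wLpNormE n p w ((HLM n)^[k] fun y => (‖f y‖₊ : ℝ≥0∞)) ≤
            c * ApConst n p w ^ ((k : ℝ) / (p - 1)) * wLpNorm n p w f := by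
  have hC := buckleyConst_ne_top (n := n) hp
  refine ⟨buckleyConst n p ^ ((k : ℝ) / p),
    ENNReal.rpow_pos (pos_iff_ne_zero.2 (buckleyConst_ne_zero n p)) hC,
    ENNReal.rpow_lt_top_of_nonneg (by positivity) hC, fun w hw hAp f hf _ => ?_⟩
  have hiter := iterate_le_pow_mul (S := {F | Measurable F}) (T := HLM n)
    (N := fun F => ∫⁻ x, F x ^ p * w x) (fun F _ => measurable_HLM F)
    (fun _ hF => lintegral_HLM_rpow_mul_le hp hw hAp hF) hf.nnnorm.coe_nnreal_ennreal k
  calc wLpNormE n p w ((HLM n)^[k] fun y => (‖f y‖₊ : ℝ≥0∞))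
      ≤ ((buckleyConst n p * ApConst n p w ^ (p / (p - 1))) ^ k *
          ∫⁻ x, (‖f x‖₊ : ℝ≥0∞) ^ p * w x) ^ (1 / p) :=
        ENNReal.rpow_le_rpow hiter (by positivity)
    _ = _ := rpow_one_div_pow_mul_rpow hp _ _ _ k

/-- weighted bound for the iterated Hardy–Littlewood maximal operator:
`‖M^k f‖_{L^p(w)} ≤ c [w]_{A_p}^{k/(p−1)} ‖f‖_{L^p(w)}`. -/
theorem statement8 (n : ℕ) (hn : 1 ≤ n) (k : ℕ) (hk : 1 ≤ k) (p : ℝ) (hp : 1 < p) :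
    ∃ c : ℝ≥0∞, 0 < c ∧ c < ∞ ∧
      ∀ w : (Fin n → ℝ) → ℝ≥0∞, IsWeight n w → ApConst n p w < ∞ →
        ∀ f : (Fin n → ℝ) → ℝ, Measurable f → wLpNorm n p w f < ∞ →
          wLpNormE n p w ((HLM n)^[k] fun y => (‖f y‖₊ : ℝ≥0∞)) ≤
            c * ApConst n p w ^ ((k : ℝ) / (p - 1)) * wLpNorm n p w f :=
  statement8_general n k p hp
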